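/- arXiv:2605.25885 — 2 statements merged into one kernel-verified Lean document; each statement's English description precedes it below -/
import Mathlib

section
/- Let a > 0, let j be a nonzero integer, set b = 1/(2a|j|(√(a²j²+1) + a|j| + 1/(2a|j|))), Q = (1-b²)^{-1/2}·[[1,b],[b,1]], and let A be the 2×2 matrix with entries A₁₁ = -a|j| - 1/(2a|j|), A₁₂ = 1/(2a|j|), A₂₁ = -1/(2a|j|), A₂₂ = a|j| + 1/(2a|j|). Then Q⁻¹ A Q = diag(-√(a²j²+1), √(a²j²+1)). -/
/-!
Write `m = a|j|`, `c = 1/(2m)` and `s = √(m² + 1)`, so that `A = [[-m-c, c], [-c, m+c]]` and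
`b = c/(s+m+c)`. Since `2mc = 1`, `(m+c)² - s² = c²`, hence also `cb = m+c-s`; these two relations
say exactly that `(1, b)` and `(b, 1)` are eigenvectors of `A` for `-s` and `s`. As `0 < b < 1`,
the matrix `Q` of these eigenvectors is invertible.
-/

namespace Matrix

variable {n R : Type*} [Fintype n] [DecidableEq n] [CommRing R]

theorem inv_mul_mul_eq_of_mul_eq {P A D : Matrix n n R} (hP : IsUnit P.det)
    (h : A * P = P * D) : P⁻¹ * A * P = D := by
  rw [mul_assoc, h, nonsing_inv_mul_cancel_left _ _ hP]

theorem inv_smul_mul_mul_smul_eq_of_mul_eq {r : R} {P A D : Matrix n n R} (hr : IsUnit r)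
    (hP : IsUnit P.det) (h : A * P = P * D) : (r • P)⁻¹ * A * (r • P) = D := by
  refine inv_mul_mul_eq_of_mul_eq ?_ ?_
  · rw [det_smul]
    exact (hr.pow _).mul hP
  · rw [Matrix.mul_smul, Matrix.smul_mul, h]

end Matrix

theorem fin_two_mul_eq_mul_diag {K : Type*} [Field K] {m c s b : K} (hc : 2 * m * c = 1)
    (hs : s ^ 2 = m ^ 2 + 1) (hsum : s + m + c ≠ 0) (hb : b * (s + m + c) = c) :
    !![-m - c, c; -c, m + c] * !![1, b; b, 1] = !![1, b; b, 1] * !![-s, 0; 0, s] := by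
  have hcb : c * b = m + c - s := by
    refine mul_right_cancel₀ hsum ?_
    linear_combination c * hb + hs - hc
  rw [Matrix.mul_fin_two, Matrix.mul_fin_two]
  simp only [EmbeddingLike.apply_eq_iff_eq, Matrix.vecCons_inj, and_true]
  refine ⟨⟨?_, ?_⟩, ?_, ?_⟩
  · linear_combination hcb
  · linear_combination -hb
  · linear_combination hb
  · linear_combination -hcb

/-- Explicit diagonalization of the Fourier block `A_j(a)` of the linearized
Vlasov–Poisson electron-layer equations by the symplectic matrix `Q_j(a)`:
`Q⁻¹ A Q = diag(-√(a²j²+1), √(a²j²+1))`. -/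
theorem Q_diagonalizes_Aj (a : ℝ) (ha : 0 < a) (j : ℤ) (hj : j ≠ 0) (b : ℝ)
    (hb : b = 1 / (2 * a * |(j : ℝ)| *
      (Real.sqrt (a ^ 2 * (j : ℝ) ^ 2 + 1) + a * |(j : ℝ)| + 1 / (2 * a * |(j : ℝ)|))))
    (Q A : Matrix (Fin 2) (Fin 2) ℝ)
    (hQ : Q = (Real.sqrt (1 - b ^ 2))⁻¹ • !![1, b; b, 1])
    (hA : A = !![-(a * |(j : ℝ)|) - 1 / (2 * a * |(j : ℝ)|), 1 / (2 * a * |(j : ℝ)|);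
                 -(1 / (2 * a * |(j : ℝ)|)), a * |(j : ℝ)| + 1 / (2 * a * |(j : ℝ)|)]) :
    Q⁻¹ * A * Q = !![-Real.sqrt (a ^ 2 * (j : ℝ) ^ 2 + 1), 0;
                     0, Real.sqrt (a ^ 2 * (j : ℝ) ^ 2 + 1)] := by
  have hm : 0 < a * |(j : ℝ)| := mul_pos ha (abs_pos.mpr (Int.cast_ne_zero.mpr hj))
  have hs : Real.sqrt (a ^ 2 * (j : ℝ) ^ 2 + 1) ^ 2 = (a * |(j : ℝ)|) ^ 2 + 1 := by
    rw [Real.sq_sqrt (by positivity), mul_pow, sq_abs]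
  rw [hQ, hA]
  set m := a * |(j : ℝ)|
  set c := 1 / (2 * a * |(j : ℝ)|)
  set s := Real.sqrt (a ^ 2 * (j : ℝ) ^ 2 + 1)
  have hc : 2 * m * c = 1 := by simp only [m, c]; field_simp
  have hsum : 0 < s + m + c := by positivity
  have hb' : b = c / (s + m + c) := by rw [hb, div_mul_eq_div_div]
  have hb0 : 0 < b := by rw [hb']; positivity
  have hb1 : b < 1 := by rw [hb', div_lt_one hsum]; exact lt_add_of_pos_left c (by positivity)
  refine Matrix.inv_smul_mul_mul_smul_eq_of_mul_eq ?_ ?_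
    (fin_two_mul_eq_mul_diag hc hs hsum.ne' (by rw [hb', div_mul_cancel₀ _ hsum.ne']))
  · exact isUnit_iff_ne_zero.mpr (inv_ne_zero (Real.sqrt_pos.mpr (by nlinarith)).ne')
  · rw [Matrix.det_fin_two_of]
    exact isUnit_iff_ne_zero.mpr (by nlinarith)
end

section
/- Let 0 < a₀ < a₁, let d ≥ 1, and let j₁, …, j_d be pairwise distinct positive integers. If c₁, …, c_d are real numbers such that ∑_{k=1}^{d} c_k · √(a²j_k² + 1) = 0 for every a ∈ [a₀, a₁], then c₁ = ⋯ = c_d = 0. -/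
/-!
After the substitution `x = a²`, each `√(a²j² + 1)` becomes `j · (x + j⁻²)^(1/2)`, so it suffices
that shifted powers `(x + s_k)^r` with distinct shifts and `r ∉ ℕ` are linearly independent near
any point `x₀` where all `x₀ + s_k > 0`. Differentiating `n` times at `x₀` gives
`∑ c_k (x₀ + s_k)^r · ((x₀ + s_k)⁻¹)^n = 0` for every `n`, because the falling factorial
`r (r - 1) ⋯ (r - n + 1)` never vanishes; this is a Vandermonde system in the distinct nodes
`(x₀ + s_k)⁻¹`, so all coefficients vanish.
-/

open Real Filter Topology

theorem descPochhammer_eval_ne_zero {r : ℝ} (hr : ∀ m : ℕ, r ≠ m) (n : ℕ) :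
    (descPochhammer ℝ n).eval r ≠ 0 := by
  rw [descPochhammer_eval_eq_prod_range]
  exact Finset.prod_ne_zero_iff.2 fun i _ => sub_ne_zero.2 (hr i)

theorem iteratedDeriv_rpow_add_const (r s x : ℝ) (n : ℕ) :
    iteratedDeriv n (fun x => (x + s) ^ r) x = (descPochhammer ℝ n).eval r * (x + s) ^ (r - n) := by
  rw [iteratedDeriv_comp_add_const (f := fun x => x ^ r), iteratedDeriv_eq_iterate]
  exact iter_deriv_rpow_const r (x + s) n

theorem eq_zero_of_sum_mul_rpow_add_eventuallyEq_zero {d : ℕ} {r x₀ : ℝ} {s c : Fin d → ℝ}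
    (hr : ∀ m : ℕ, r ≠ m) (hs : Function.Injective s) (hpos : ∀ k, 0 < x₀ + s k)
    (h : (fun x => ∑ k, c k * (x + s k) ^ r) =ᶠ[𝓝 x₀] 0) : c = 0 := by
  have hderiv (n : ℕ) : ∑ k, c k * (x₀ + s k) ^ r * ((x₀ + s k)⁻¹) ^ n = 0 := by
    have hsmooth : ∀ k ∈ Finset.univ, ContDiffAt ℝ n (fun x => c k * (x + s k) ^ r) x₀ :=
      fun k _ => contDiffAt_const.mul <|
        (contDiffAt_rpow_const_of_ne (hpos k).ne').comp x₀ (contDiffAt_id.add contDiffAt_const)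
    refine (mul_eq_zero.1 ?_).resolve_left (descPochhammer_eval_ne_zero hr n)
    calc (descPochhammer ℝ n).eval r * ∑ k, c k * (x₀ + s k) ^ r * ((x₀ + s k)⁻¹) ^ n
        = ∑ k, iteratedDeriv n (fun x => c k * (x + s k) ^ r) x₀ := by
          simp only [Finset.mul_sum, iteratedDeriv_const_mul_field, iteratedDeriv_rpow_add_const]
          refine Finset.sum_congr rfl fun k _ => ?_
          rw [rpow_sub_natCast (hpos k).ne', inv_pow]
          ring
      _ = iteratedDeriv n 0 x₀ := by rw [← iteratedDeriv_fun_sum hsmooth, h.iteratedDeriv_eq]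
      _ = 0 := by simp [Pi.zero_def]
  have hv := Matrix.eq_zero_of_forall_pow_sum_mul_pow_eq_zero
    (inv_injective.comp ((add_right_injective x₀).comp hs)) fun n => hderiv n
  funext k
  simpa [(rpow_pos_of_pos (hpos k) r).ne'] using congrFun hv k

theorem sqrt_mul_add_one_eq {b : ℝ} (hb : 0 < b) (x : ℝ) :
    √(x * b + 1) = √b * (x + b⁻¹) ^ (1 / 2 : ℝ) := by
  rw [← sqrt_eq_rpow, ← sqrt_mul hb.le, mul_add, mul_inv_cancel₀ hb.ne', mul_comm]

theorem one_half_ne_natCast (m : ℕ) : (1 / 2 : ℝ) ≠ m := by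
  have : ((1 : ℕ) : ℝ) ≠ (2 * m : ℕ) := Nat.cast_injective.ne (by omega)
  push_cast at this
  contrapose! this
  linarith

theorem nondegeneracy_equilibrium_frequencies_general (a₀ a₁ : ℝ) (h0 : 0 < a₀) (h01 : a₀ < a₁)
    (d : ℕ) (j : Fin d → ℕ) (hpos : ∀ k, 0 < j k)
    (hinj : Function.Injective j) (c : Fin d → ℝ)
    (h : ∀ a ∈ Set.Icc a₀ a₁, ∑ k, c k * Real.sqrt (a ^ 2 * (j k : ℝ) ^ 2 + 1) = 0) :
    ∀ k, c k = 0 := by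
  set b : Fin d → ℝ := fun k => ((j k ^ 2 : ℕ) : ℝ)
  have hb (k : Fin d) : 0 < b k := Nat.cast_pos.2 (pow_pos (hpos k) 2)
  have hb_inj : Function.Injective b :=
    Nat.cast_injective.comp ((Nat.pow_left_injective two_ne_zero).comp hinj)
  have hx₀ : (a₀ ^ 2 + a₁ ^ 2) / 2 ∈ Set.Ioo (a₀ ^ 2) (a₁ ^ 2) := by
    constructor <;> nlinarith
  have hvanish : (fun x => ∑ k, (c k * √(b k)) * (x + (b k)⁻¹) ^ (1 / 2 : ℝ))
      =ᶠ[𝓝 ((a₀ ^ 2 + a₁ ^ 2) / 2)] 0 := by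
    filter_upwards [isOpen_Ioo.mem_nhds hx₀] with x hx
    have hx_pos : 0 < x := (pow_pos h0 2).trans hx.1
    have ha : √x ∈ Set.Icc a₀ a₁ :=
      ⟨le_sqrt_of_sq_le hx.1.le, (sqrt_le_left (by linarith)).2 hx.2.le⟩
    rw [Pi.zero_apply, ← h (√x) ha, sq_sqrt hx_pos.le]
    refine Finset.sum_congr rfl fun k _ => ?_
    rw [mul_assoc, ← sqrt_mul_add_one_eq (hb k)]
    push_cast [b]
    rfl
  have hzero := eq_zero_of_sum_mul_rpow_add_eventuallyEq_zero one_half_ne_natCast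
    (inv_injective.comp hb_inj) (fun k => add_pos (by positivity) (inv_pos.2 (hb k))) hvanish
  intro k
  simpa [(sqrt_pos.2 (hb k)).ne'] using congrFun hzero k

/-- Non-degeneracy of the equilibrium frequency vector: the functions
`a ↦ √(a²j_k²+1)` for pairwise distinct positive integers `j_k` are linearly
independent on any interval `[a₀,a₁]` with `0 < a₀ < a₁`. -/
theorem nondegeneracy_equilibrium_frequencies (a₀ a₁ : ℝ) (h0 : 0 < a₀) (h01 : a₀ < a₁)
    (d : ℕ) (hd : 1 ≤ d) (j : Fin d → ℕ) (hpos : ∀ k, 0 < j k)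
    (hinj : Function.Injective j) (c : Fin d → ℝ)
    (h : ∀ a ∈ Set.Icc a₀ a₁, ∑ k, c k * Real.sqrt (a ^ 2 * (j k : ℝ) ^ 2 + 1) = 0) :
    ∀ k, c k = 0 :=
  nondegeneracy_equilibrium_frequencies_general a₀ a₁ h0 h01 d j hpos hinj c h
end
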